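/- For any positive real γ and any matrices K, K_0, H, L as above, the condition T_K* T_K - T_{K_0}* T_{K_0} ⪯ γ² I is equivalent to (K - K_0)(I + H H*)(K - K_0)* ⪯ γ² (I + γ^{-2} L (I + H* H)^{-1} L*)^{-1}. -/

import Mathlib

/-!
With `W = [H, I]` one has `T_K = T_{K₀} - D` for `D = (K - K₀) W`, and the normal equation
`K₀ (I + H H*) = L H*` says `T_{K₀} W* = 0`; hence `D T_{K₀}* = 0`,
`D D* = (K - K₀)(I + H H*)(K - K₀)*` and `T_{K₀} T_{K₀}* = L (I + H* H)⁻¹ L* =: P`.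
The left-hand condition is `A - T_K* T_K ⪰ 0` for `A = γ² I + T_{K₀}* T_{K₀} ≻ 0`, which by a
Schur complement is `I - T_K A⁻¹ T_K* ⪰ 0`. By the orthogonality `A` acts on `D*` as the scalar
`γ²` and on `T_{K₀}*` by push-through, so `T_K A⁻¹ T_K* = P (γ² I + P)⁻¹ + γ⁻² D D*`, and
`I - T_K A⁻¹ T_K*` is `γ⁻²` times the right-hand matrix.
-/

open Matrix
open scoped ComplexOrder

/-- The error operator `T_K = [L - K H, -K]`. -/
noncomputable def Terr {m n p : ℕ} (H : Matrix (Fin m) (Fin n) ℂ) (L : Matrix (Fin p) (Fin n) ℂ)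
    (K : Matrix (Fin p) (Fin m) ℂ) : Matrix (Fin p) (Fin n ⊕ Fin m) ℂ :=
  Matrix.fromCols (L - K * H) (-K)

/-- The noncausal estimator `K₀ = L H* (I + H H*)⁻¹`. -/
noncomputable def Kzero {m n p : ℕ} (H : Matrix (Fin m) (Fin n) ℂ)
    (L : Matrix (Fin p) (Fin n) ℂ) : Matrix (Fin p) (Fin m) ℂ :=
  L * Hᴴ * (1 + H * Hᴴ)⁻¹

namespace Matrix

variable {ι ι' κ κ' R 𝕜 : Type*}

theorem fromCols_mul_conjTranspose_fromCols [CommRing R] [StarRing R] [Fintype κ] [Fintype κ']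
    (A : Matrix ι κ R) (B : Matrix ι κ' R) (C : Matrix ι' κ R) (E : Matrix ι' κ' R) :
    fromCols A B * (fromCols C E)ᴴ = A * Cᴴ + B * Eᴴ := by
  rw [conjTranspose_fromCols_eq_fromRows_conjTranspose, fromCols_mul_fromRows]

theorem PosDef.posSemidef_sub_conjTranspose_mul_iff [Field R] [PartialOrder R] [StarRing R]
    [StarOrderedRing R] [Fintype ι] [Fintype κ] [DecidableEq ι] [DecidableEq κ]
    {A : Matrix ι ι R} (hA : A.PosDef) (B : Matrix κ ι R) :
    (A - Bᴴ * B).PosSemidef ↔ (1 - B * A⁻¹ * Bᴴ).PosSemidef := by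
  have := hA.isUnit.invertible
  have : Invertible (1 : Matrix κ κ R) := invertibleOne
  have h₂₂ := PosDef.fromBlocks₂₂ A Bᴴ (PosDef.one (n := κ) (R := R))
  have h₁₁ := PosDef.fromBlocks₁₁ Bᴴ 1 hA
  simp only [inv_one, Matrix.mul_one, conjTranspose_conjTranspose] at h₂₂ h₁₁
  exact h₂₂.symm.trans h₁₁

section RCLike

variable [RCLike 𝕜]

theorem posSemidef_smul_iff {c : 𝕜} (hc : 0 < c) {M : Matrix ι ι 𝕜} :
    (c • M).PosSemidef ↔ M.PosSemidef :=
  ⟨fun h => by simpa [smul_smul, inv_mul_cancel₀ hc.ne'] using h.smul (inv_nonneg.2 hc.le),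
    fun h => h.smul hc.le⟩

theorem posDef_one_add_conjTranspose_mul [Fintype ι] [Fintype κ] [DecidableEq ι]
    (A : Matrix κ ι 𝕜) : (1 + Aᴴ * A).PosDef :=
  PosDef.one.add_posSemidef (posSemidef_conjTranspose_mul_self A)

theorem posDef_one_add_mul_conjTranspose [Fintype ι] [Fintype κ] [DecidableEq κ]
    (A : Matrix κ ι 𝕜) : (1 + A * Aᴴ).PosDef :=
  PosDef.one.add_posSemidef (posSemidef_self_mul_conjTranspose A)

theorem posSemidef_smul_one_sub_iff_of_mul_conjTranspose_eq_zero [Fintype ι] [Fintype κ]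
    [DecidableEq ι] [DecidableEq κ] {c : 𝕜} (hc : 0 < c) {T D : Matrix κ ι 𝕜}
    (hDT : D * Tᴴ = 0) :
    (c • (1 : Matrix ι ι 𝕜) - ((T + D)ᴴ * (T + D) - Tᴴ * T)).PosSemidef ↔
      (c • (1 + c⁻¹ • (T * Tᴴ))⁻¹ - D * Dᴴ).PosSemidef := by
  have hTD : T * Dᴴ = 0 := by simpa using congrArg conjTranspose hDT
  set A := c • (1 : Matrix ι ι 𝕜) + Tᴴ * T with hA_def
  set S := c • (1 : Matrix κ κ 𝕜) + T * Tᴴ with hS_def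
  have hA : A.PosDef :=
    (PosDef.one.smul hc).add_posSemidef (posSemidef_conjTranspose_mul_self T)
  have hS : S.PosDef :=
    (PosDef.one.smul hc).add_posSemidef (posSemidef_self_mul_conjTranspose T)
  have := hA.isUnit.invertible
  have := hS.isUnit.invertible
  have hAT : A * Tᴴ = Tᴴ * S := by
    simp only [hA_def, hS_def, Matrix.add_mul, Matrix.mul_add, Matrix.smul_mul,
      Matrix.mul_smul, Matrix.one_mul, Matrix.mul_one, Matrix.mul_assoc]
  have hAD : A * Dᴴ = c • Dᴴ := by
    simp only [hA_def, Matrix.add_mul, Matrix.smul_mul, Matrix.one_mul, Matrix.mul_assoc, hTD,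
      Matrix.mul_zero, add_zero]
  have hAinv : A⁻¹ * (T + D)ᴴ = Tᴴ * S⁻¹ + c⁻¹ • Dᴴ := by
    rw [inv_mul_eq_iff_eq_mul_of_invertible, Matrix.mul_add, ← Matrix.mul_assoc, hAT,
      Matrix.mul_assoc, mul_inv_of_invertible, Matrix.mul_one, Matrix.mul_smul, hAD, smul_smul,
      inv_mul_cancel₀ hc.ne', one_smul, conjTranspose_add]
  have hSinv : (1 + c⁻¹ • (T * Tᴴ))⁻¹ = c • S⁻¹ := by
    have : 1 + c⁻¹ • (T * Tᴴ) = c⁻¹ • S := by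
      rw [hS_def, smul_add, smul_smul, inv_mul_cancel₀ hc.ne', one_smul]
    rw [this]
    refine inv_eq_right_inv ?_
    rw [Matrix.smul_mul, Matrix.mul_smul, smul_smul, inv_mul_cancel₀ hc.ne', one_smul,
      mul_inv_of_invertible]
  have hTS : 1 - T * Tᴴ * S⁻¹ = c • S⁻¹ := by
    have h := mul_inv_of_invertible S
    nth_rw 1 [hS_def] at h
    rw [Matrix.add_mul, Matrix.smul_mul, Matrix.one_mul] at h
    rw [← h, add_sub_cancel_right]
  have hSchur :
      1 - (T + D) * A⁻¹ * (T + D)ᴴ = c⁻¹ • (c • (1 + c⁻¹ • (T * Tᴴ))⁻¹ - D * Dᴴ) := by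
    rw [Matrix.mul_assoc, hAinv, hSinv, Matrix.add_mul, Matrix.mul_add, Matrix.mul_add,
      ← Matrix.mul_assoc T, ← Matrix.mul_assoc D, hDT, Matrix.zero_mul, Matrix.mul_smul,
      Matrix.mul_smul, hTD, smul_zero, add_zero, zero_add, smul_sub, smul_smul,
      inv_mul_cancel₀ hc.ne', one_smul, ← hTS]
    abel
  rw [show c • (1 : Matrix ι ι 𝕜) - ((T + D)ᴴ * (T + D) - Tᴴ * T) = A - (T + D)ᴴ * (T + D) by
      rw [hA_def]; abel,
    hA.posSemidef_sub_conjTranspose_mul_iff, hSchur, posSemidef_smul_iff (inv_pos.2 hc)]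

end RCLike

end Matrix

section Estimation

variable {m n p : ℕ} (H : Matrix (Fin m) (Fin n) ℂ) (L : Matrix (Fin p) (Fin n) ℂ)

theorem Terr_eq_fromCols_sub_mul (K : Matrix (Fin p) (Fin m) ℂ) :
    Terr H L K = fromCols L 0 - K * fromCols H 1 := by
  ext i (j | j) <;> simp [Terr]

theorem Kzero_mul_one_add_mul_conjTranspose : Kzero H L * (1 + H * Hᴴ) = L * Hᴴ := by
  have := (posDef_one_add_mul_conjTranspose H).isUnit.invertible
  rw [Kzero, inv_mul_cancel_right_of_invertible]

theorem Terr_Kzero_mul_conjTranspose_fromCols :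
    Terr H L (Kzero H L) * (fromCols H (1 : Matrix (Fin m) (Fin m) ℂ))ᴴ = 0 := by
  rw [Terr_eq_fromCols_sub_mul, Matrix.sub_mul, Matrix.mul_assoc,
    fromCols_mul_conjTranspose_fromCols, fromCols_mul_conjTranspose_fromCols,
    conjTranspose_one, Matrix.zero_mul, Matrix.mul_one, add_zero, add_comm (H * Hᴴ),
    Kzero_mul_one_add_mul_conjTranspose, sub_self]

theorem sub_Kzero_mul : L - Kzero H L * H = L * (1 + Hᴴ * H)⁻¹ := by
  have := (posDef_one_add_conjTranspose_mul H).isUnit.invertible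
  refine ((mul_inv_eq_iff_eq_mul_of_invertible _ _ _).2 ?_).symm
  calc L = L * (1 + Hᴴ * H) - Kzero H L * (1 + H * Hᴴ) * H := by
        rw [Kzero_mul_one_add_mul_conjTranspose, Matrix.mul_add, Matrix.mul_one, Matrix.mul_assoc,
          add_sub_cancel_right]
    _ = (L - Kzero H L * H) * (1 + Hᴴ * H) := by
        simp only [Matrix.sub_mul, Matrix.mul_add, Matrix.add_mul, Matrix.mul_one, Matrix.mul_assoc]
        abel

theorem Terr_Kzero_mul_conjTranspose_self :
    Terr H L (Kzero H L) * (Terr H L (Kzero H L))ᴴ = L * (1 + Hᴴ * H)⁻¹ * Lᴴ := by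
  nth_rw 2 [Terr_eq_fromCols_sub_mul]
  rw [conjTranspose_sub, Matrix.mul_sub, conjTranspose_mul, ← Matrix.mul_assoc,
    Terr_Kzero_mul_conjTranspose_fromCols, Matrix.zero_mul, sub_zero, Terr,
    fromCols_mul_conjTranspose_fromCols, sub_Kzero_mul, conjTranspose_zero, Matrix.mul_zero,
    add_zero]

end Estimation

/-- for `γ > 0`, `T_K* T_K - T_{K₀}* T_{K₀} ⪯ γ² I` iff
`(K - K₀)(I + H H*)(K - K₀)* ⪯ γ² (I + γ⁻² L (I + H* H)⁻¹ L*)⁻¹`. -/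
theorem regret_condition_reduction {m n p : ℕ}
    (H : Matrix (Fin m) (Fin n) ℂ) (L : Matrix (Fin p) (Fin n) ℂ)
    (K : Matrix (Fin p) (Fin m) ℂ) (γ : ℝ) (hγ : 0 < γ) :
    ((γ ^ 2 : ℂ) • (1 : Matrix (Fin n ⊕ Fin m) (Fin n ⊕ Fin m) ℂ)
        - ((Terr H L K)ᴴ * Terr H L K
            - (Terr H L (Kzero H L))ᴴ * Terr H L (Kzero H L))).PosSemidef
      ↔ ((γ ^ 2 : ℂ) • (1 + (γ ^ 2 : ℂ)⁻¹ • (L * (1 + Hᴴ * H)⁻¹ * Lᴴ))⁻¹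
          - (K - Kzero H L) * (1 + H * Hᴴ) * (K - Kzero H L)ᴴ).PosSemidef := by
  have hc : (0 : ℂ) < (γ ^ 2 : ℂ) := by exact_mod_cast pow_pos hγ 2
  set W : Matrix (Fin m) (Fin n ⊕ Fin m) ℂ := fromCols H 1 with hW
  have hsplit : Terr H L K = Terr H L (Kzero H L) + -((K - Kzero H L) * W) := by
    simp only [Terr_eq_fromCols_sub_mul, Matrix.sub_mul, ← hW]
    abel
  have horth : -((K - Kzero H L) * W) * (Terr H L (Kzero H L))ᴴ = 0 := by
    have h := congrArg conjTranspose (Terr_Kzero_mul_conjTranspose_fromCols H L)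
    rw [conjTranspose_mul, conjTranspose_conjTranspose, conjTranspose_zero, ← hW] at h
    rw [Matrix.neg_mul, Matrix.mul_assoc, h, Matrix.mul_zero, neg_zero]
  have hgram : -((K - Kzero H L) * W) * (-((K - Kzero H L) * W))ᴴ
      = (K - Kzero H L) * (1 + H * Hᴴ) * (K - Kzero H L)ᴴ := by
    rw [conjTranspose_neg, Matrix.neg_mul, Matrix.mul_neg, neg_neg, conjTranspose_mul,
      Matrix.mul_assoc, ← Matrix.mul_assoc W, hW, fromCols_mul_conjTranspose_fromCols,
      conjTranspose_one, Matrix.mul_one, add_comm, ← Matrix.mul_assoc]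
  rw [hsplit, posSemidef_smul_one_sub_iff_of_mul_conjTranspose_eq_zero hc horth,
    Terr_Kzero_mul_conjTranspose_self, hgram]
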